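/- arXiv:1804.10186 — 6 statements merged into one kernel-verified Lean document; each statement's English description precedes it below -/
import Mathlib

section
/- Let n be a real number and f(t) = t^2 * (1 + ln(n/t)). For every real x with 1 ≤ x and x + 1 ≤ n, we have f(1) + f(x) ≤ f(x+1). -/
/-! With `L = log n`, the claim reduces to `(x + 1)² log (x + 1) - x² log x ≤ 2x (1 + L)`. Split the left
side as `(2x + 1) log (x + 1) + x² log (1 + 1/x)`: the first `2x log (x + 1)` is at most `2x L`
because `x + 1 ≤ n`, and each of `log (x + 1)` and `x² log (1 + 1/x)` is at most `x` by
`log y ≤ y - 1`. -/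

open Real

lemma sq_mul_log_add_one_div_le {x : ℝ} (hx : 0 < x) : x ^ 2 * log ((x + 1) / x) ≤ x := by
  have hlog : log ((x + 1) / x) ≤ 1 / x :=
    calc log ((x + 1) / x) ≤ (x + 1) / x - 1 := log_le_sub_one_of_pos (by positivity)
      _ = 1 / x := by field_simp; ring
  calc x ^ 2 * log ((x + 1) / x) ≤ x ^ 2 * (1 / x) := by gcongr
    _ = x := by field_simp

lemma add_one_sq_mul_log_sub_sq_mul_log_le {x : ℝ} (hx : 0 < x) :
    (x + 1) ^ 2 * log (x + 1) - x ^ 2 * log x ≤ 2 * x * log (x + 1) + 2 * x := by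
  have hsucc : log (x + 1) ≤ x := by linarith [log_le_sub_one_of_pos (by linarith : 0 < x + 1)]
  have hdiff := sq_mul_log_add_one_div_le hx
  rw [log_div (by linarith) hx.ne'] at hdiff
  linarith

/-- For `f(t) = t^2 (1 + ln(n/t))`: if `1 ≤ x` and `x + 1 ≤ n`, then `f 1 + f x ≤ f (x+1)`. -/
theorem f_one_add (n : ℝ) (f : ℝ → ℝ)
    (hf : ∀ t : ℝ, f t = t ^ 2 * (1 + Real.log (n / t)))
    (x : ℝ) (hx : 1 ≤ x) (hxn : x + 1 ≤ n) :
    f 1 + f x ≤ f (x + 1) := by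
  have hx0 : 0 < x := by linarith
  have hn : 0 < n := by linarith
  have hf_pos : ∀ t, 0 < t → f t = t ^ 2 * (1 + log n - log t) := fun t ht => by
    rw [hf, log_div hn.ne' ht.ne', add_sub_assoc]
  have hlog : x * log (x + 1) ≤ x * log n := by gcongr
  rw [hf_pos 1 one_pos, hf_pos x hx0, hf_pos (x + 1) (by linarith), log_one]
  linear_combination add_one_sq_mul_log_sub_sq_mul_log_le hx0 + 2 * hlog
end

section
/- Let n be a real number with n ≥ 2x and x ≥ 12, and f(t) = t^2 * (1 + ln(n/t)). Then 2*f(x) ≤ f(x-1) + f(x+1), i.e., f is midpoint-convex at integer-spaced points in this regime. -/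
/-!
Since `log (n / t) = log n - log t` and the second difference of `t ^ 2` is `2`, the claim says
that the second difference of `t ^ 2 * log t` at `x` is at most `2 * (1 + log n)`. Splitting it as
`(x ^ 2 + 1) * (log (x + 1) + log (x - 1) - 2 * log x) + 2 * x * (log (x + 1) - log (x - 1))
+ 2 * log x` and bounding both log-differences by `log y ≤ y - 1` gives at most
`2 * log x + 3 + 4 / (x - 1)`, which is below `2 + 2 * log 2 + 2 * log x ≤ 2 * (1 + log n)`
once `x ≥ 12`, as `2 * log 2 - 1 > 0.386 > 4 / 11`.
-/

open Real

lemma log_add_one_add_log_sub_one_sub_two_mul_log_le {x : ℝ} (hx : 1 < x) :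
    log (x + 1) + log (x - 1) - 2 * log x ≤ -1 / x ^ 2 := by
  have hx0 : 0 < x := by linarith
  have hprod : 0 < (x + 1) * (x - 1) := by nlinarith
  have h := log_le_sub_one_of_pos (div_pos hprod (pow_pos hx0 2))
  rw [log_div hprod.ne' (by positivity), log_mul (by linarith) (by linarith), log_pow] at h
  have hfrac : (x + 1) * (x - 1) / x ^ 2 - 1 = -1 / x ^ 2 := by field_simp; ring
  push_cast at h
  linarith

lemma log_add_one_sub_log_sub_one_le {x : ℝ} (hx : 1 < x) :
    log (x + 1) - log (x - 1) ≤ 2 / (x - 1) := by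
  have hx1 : 0 < x - 1 := by linarith
  have h := log_le_sub_one_of_pos (div_pos (by linarith : 0 < x + 1) hx1)
  rw [log_div (by linarith) hx1.ne'] at h
  have hfrac : (x + 1) / (x - 1) - 1 = 2 / (x - 1) := by field_simp; ring
  linarith

lemma sq_mul_log_second_diff_le {x : ℝ} (hx : 1 < x) :
    (x + 1) ^ 2 * log (x + 1) + (x - 1) ^ 2 * log (x - 1) - 2 * (x ^ 2 * log x)
      ≤ 2 * log x + 3 + 4 / (x - 1) := by
  have hx0 : 0 < x := by linarith
  have hsum : (x ^ 2 + 1) * (log (x + 1) + log (x - 1) - 2 * log x) ≤ -1 :=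
    calc (x ^ 2 + 1) * (log (x + 1) + log (x - 1) - 2 * log x)
        ≤ (x ^ 2 + 1) * (-1 / x ^ 2) :=
          mul_le_mul_of_nonneg_left (log_add_one_add_log_sub_one_sub_two_mul_log_le hx)
            (by positivity)
      _ = -1 - 1 / x ^ 2 := by field_simp; ring
      _ ≤ -1 := by linarith [one_div_pos.mpr (pow_pos hx0 2)]
  have hdiff : 2 * x * (log (x + 1) - log (x - 1)) ≤ 4 + 4 / (x - 1) :=
    calc 2 * x * (log (x + 1) - log (x - 1))
        ≤ 2 * x * (2 / (x - 1)) :=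
          mul_le_mul_of_nonneg_left (log_add_one_sub_log_sub_one_le hx) (by positivity)
      _ = 4 + 4 / (x - 1) := by field_simp [(by linarith : x - 1 ≠ 0)]; ring
  linear_combination hsum + hdiff

/-- Midpoint convexity of `f` at integer-spaced points: `2 f x ≤ f (x-1) + f (x+1)`
for `x ≥ 12` and `n ≥ 2x`. -/
theorem f_midpoint_convex (n x : ℝ) (hx : 12 ≤ x) (hn : 2 * x ≤ n) (f : ℝ → ℝ)
    (hf : ∀ t : ℝ, f t = t ^ 2 * (1 + Real.log (n / t))) :
    2 * f x ≤ f (x - 1) + f (x + 1) := by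
  have hn0 : 0 < n := by linarith
  rw [hf, hf, hf, log_div hn0.ne' (by linarith), log_div hn0.ne' (by linarith),
    log_div hn0.ne' (by linarith)]
  have hsecond := sq_mul_log_second_diff_le (by linarith : 1 < x)
  have hlogn : log 2 + log x ≤ log n := by
    rw [← log_mul two_ne_zero (by linarith)]
    exact log_le_log (by linarith) hn
  have hinv : 4 / (x - 1) ≤ 4 / 11 := div_le_div_of_nonneg_left (by norm_num) (by norm_num)
    (by linarith)
  linarith [log_two_gt_d9]
end

section
/- Suppose t : ℕ → ℝ satisfies: t(0) = 0, t(1) ≤ 2, and for every m ≥ 2 there exist nonnegative integers m₁, …, m_k with each m_i ≤ (m-1)/2, ∑ m_i ≤ m-1, and t(m) ≤ m^2 + ∑ t(m_i). Then t(m) ≤ 2*m^2 for all m. -/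
open Finset

/-- If `t 0 = 0`, `t 1 ≤ 2`, and for every `m ≥ 2` there are nonnegative integers
`m₁, …, m_k`, each at most `(m-1)/2` and summing to at most `m-1`, with
`t m ≤ m^2 + ∑ t (m i)`, then `t m ≤ 2 m^2` for all `m`. -/
theorem recurrence_bound (t : ℕ → ℝ) (h0 : t 0 = 0) (h1 : t 1 ≤ 2)
    (hrec : ∀ m : ℕ, 2 ≤ m → ∃ (k : ℕ) (a : Fin k → ℕ),
      (∀ i, 2 * a i ≤ m - 1) ∧ (∑ i, a i ≤ m - 1) ∧
      t m ≤ (m : ℝ) ^ 2 + ∑ i, t (a i)) :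
    ∀ m : ℕ, t m ≤ 2 * (m : ℝ) ^ 2 := by
  intro m
  induction m using Nat.strong_induction_on with
  | _ m ih =>
    match m with
    | 0 => simp [h0]
    | 1 => simpa using h1.trans (by norm_num)
    | (n+2) =>
      obtain ⟨k, a, ha1, ha2, ha3⟩ := hrec (n+2) (by omega)
      have hstep : ∑ i, t (a i) ≤ ∑ i, 2 * ((a i : ℝ))^2 := by
        apply Finset.sum_le_sum
        intro i _
        exact ih (a i) (by have := ha1 i; omega)
      have hnat : 2 * ∑ i, (a i)^2 ≤ (n+1)^2 := by
        calc 2 * ∑ i, (a i)^2 = ∑ i, a i * (2 * a i) := by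
              rw [Finset.mul_sum]; apply Finset.sum_congr rfl; intro i _; ring
          _ ≤ ∑ i, a i * (n+1) := by
              apply Finset.sum_le_sum; intro i _
              exact Nat.mul_le_mul_left _ (by have := ha1 i; omega)
          _ = (∑ i, a i) * (n+1) := by rw [Finset.sum_mul]
          _ ≤ (n+1) * (n+1) := Nat.mul_le_mul_right _ (by have := ha2; omega)
          _ = (n+1)^2 := by ring
      have hcast : ∑ i, 2 * ((a i : ℝ))^2 ≤ ((n:ℝ)+1)^2 := by
        have := (Nat.cast_le (α := ℝ)).2 hnat
        push_cast at this ⊢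
        rw [← Finset.mul_sum]
        linarith
      calc t (n+2) ≤ ((n+2:ℕ) : ℝ)^2 + ∑ i, t (a i) := ha3
        _ ≤ ((n+2:ℕ) : ℝ)^2 + ((n:ℝ)+1)^2 := by linarith
        _ ≤ 2 * ((n+2:ℕ) : ℝ)^2 := by push_cast; nlinarith [Nat.cast_nonneg (α := ℝ) n]
end

section
/- In a rooted tree T on n nodes with heavy path decomposition, ∑_{v light node of T} |T^v|^2 ≤ 2*n^2. -/
open scoped Classical
open Finset

/-- A rooted tree on `n` nodes, given by a parent function, together with a choice
of heavy child (heavy path decomposition). The `rank` function witnesses acyclicity. -/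
structure HPTree (n : ℕ) where
  parent : Fin n → Fin n
  root : Fin n
  parent_root : parent root = root
  rank : Fin n → ℕ
  rank_lt : ∀ v, v ≠ root → rank (parent v) < rank v
  heavyChild : Fin n → Option (Fin n)

namespace HPTree

variable {n : ℕ}

/-- `v` is an ancestor of `u` (every node is an ancestor of itself). -/
def isAnc (T : HPTree n) (v u : Fin n) : Prop := ∃ k, T.parent^[k] u = v

/-- The number of nodes in the subtree rooted at `v`. -/
noncomputable def subtreeSize (T : HPTree n) (v : Fin n) : ℕ :=
  (univ.filter fun u => T.isAnc v u).card

/-- `c` is a child of `v`. -/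
def isChild (T : HPTree n) (c v : Fin n) : Prop := T.parent c = v ∧ c ≠ v

/-- The designated heavy child of every node is a child whose subtree size is
maximal among the children, and every node with at least one child has one. -/
def heavyValid (T : HPTree n) : Prop :=
  (∀ v c, T.heavyChild v = some c → T.isChild c v ∧
    ∀ c', T.isChild c' v → T.subtreeSize c' ≤ T.subtreeSize c) ∧
  (∀ v c', T.isChild c' v → ∃ c, T.heavyChild v = some c)

/-- A node is light if it is the root or is not the heavy child of its parent. -/
def isLight (T : HPTree n) (v : Fin n) : Prop :=
  v = T.root ∨ T.heavyChild (T.parent v) ≠ some v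

/-- The number of light ancestors of `u` (including `u` itself). -/
noncomputable def ldepth (T : HPTree n) (u : Fin n) : ℕ :=
  (univ.filter fun v => T.isAnc v u ∧ T.isLight v).card

end HPTree

namespace HPTree

variable {n : ℕ} (T : HPTree n)

lemma isAnc_trans' {a b c : Fin n} (h1 : T.isAnc a b) (h2 : T.isAnc b c) : T.isAnc a c := by
  obtain ⟨k1, hk1⟩ := h1; obtain ⟨k2, hk2⟩ := h2
  exact ⟨k1 + k2, by rw [Function.iterate_add_apply, hk2, hk1]⟩

lemma rank_lt_of_isAnc {a b : Fin n} (h : T.isAnc a b) (hne : a ≠ b) :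
    T.rank a < T.rank b := by
  obtain ⟨k, hk⟩ := h
  induction k generalizing b with
  | zero => simp at hk; exact absurd hk.symm hne
  | succ k ih =>
    rw [Function.iterate_succ_apply] at hk
    by_cases hb : T.parent b = b
    · exact ih hne (by rwa [hb] at hk)
    · have hbroot : b ≠ T.root := fun h => hb (by rw [h, T.parent_root])
      have h1 : T.rank (T.parent b) < T.rank b := T.rank_lt b hbroot
      by_cases hap : a = T.parent b
      · rw [hap]; exact h1
      · exact lt_trans (ih hap hk) h1

lemma isAnc_parent' {v u : Fin n} (h : T.isAnc v u) (hne : v ≠ u) :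
    T.isAnc v (T.parent u) := by
  obtain ⟨k, hk⟩ := h
  cases k with
  | zero => simp at hk; exact absurd hk.symm hne
  | succ k => exact ⟨k, by rwa [Function.iterate_succ_apply] at hk⟩

lemma isAnc_comparable {a b u : Fin n} (h1 : T.isAnc a u) (h2 : T.isAnc b u) :
    T.isAnc a b ∨ T.isAnc b a := by
  obtain ⟨k1, hk1⟩ := h1; obtain ⟨k2, hk2⟩ := h2
  rcases le_total k1 k2 with h | h
  · exact Or.inr ⟨k2 - k1, by
      rw [← hk1, ← Function.iterate_add_apply, Nat.sub_add_cancel h, hk2]⟩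
  · exact Or.inl ⟨k1 - k2, by
      rw [← hk2, ← Function.iterate_add_apply, Nat.sub_add_cancel h, hk1]⟩

lemma not_isAnc_sibling {p c1 c2 : Fin n} (h1 : T.isChild c1 p) (h2 : T.isChild c2 p)
    (h : T.isAnc c2 c1) (hne : c2 ≠ c1) : False := by
  have hp : T.isAnc c2 p := by
    have := T.isAnc_parent' h hne
    rwa [h1.1] at this
  have hc2root : c2 ≠ T.root := by
    intro hr
    exact h2.2 (by rw [← h2.1, hr, T.parent_root, ← hr])
  have hrank : T.rank p < T.rank c2 := h2.1 ▸ T.rank_lt c2 hc2root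
  rcases eq_or_ne c2 p with h' | h'
  · exact h2.2 h'
  · exact absurd (T.rank_lt_of_isAnc hp h') (not_lt.2 hrank.le)

lemma disjoint_sibling_subtrees {p c1 c2 w : Fin n} (h1 : T.isChild c1 p)
    (h2 : T.isChild c2 p) (hne : c1 ≠ c2) (hw1 : T.isAnc c1 w) (hw2 : T.isAnc c2 w) :
    False := by
  rcases T.isAnc_comparable hw1 hw2 with h | h
  · exact T.not_isAnc_sibling h2 h1 h hne
  · exact T.not_isAnc_sibling h1 h2 h hne.symm

end HPTree

/-- The sum of squared sizes of subtrees rooted at light nodes is at most `2 n²`. -/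
theorem sum_light_subtrees_sq_le {n : ℕ} (T : HPTree n) (hT : T.heavyValid) :
    ∑ v ∈ Finset.univ.filter (fun v => T.isLight v), (T.subtreeSize v) ^ 2
      ≤ 2 * n ^ 2 := by
  classical
  -- subtree finsets
  set A : Fin n → Finset (Fin n) := fun v => univ.filter fun u => T.isAnc v u with hA
  have hAcard : ∀ v, T.subtreeSize v = (A v).card := fun v => rfl
  set L : Finset (Fin n) := univ.filter (fun v => T.isLight v ∧ v ≠ T.root) with hLdef
  -- every v in L is a child of its parent, and has a heavy sibling
  have hchild : ∀ v ∈ L, T.isChild v (T.parent v) := by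
    intro v hv
    simp only [hLdef, mem_filter, mem_univ, true_and] at hv
    refine ⟨rfl, fun h => ?_⟩
    have := T.rank_lt v hv.2
    rw [← h] at this
    exact lt_irrefl _ this
  -- heavy sibling function
  have hHex : ∀ v ∈ L, ∃ c, T.heavyChild (T.parent v) = some c :=
    fun v hv => hT.2 (T.parent v) v (hchild v hv)
  choose! H hH using hHex
  have hHchild : ∀ v ∈ L, T.isChild (H v) (T.parent v) :=
    fun v hv => (hT.1 (T.parent v) (H v) (hH v hv)).1
  have hHsize : ∀ v ∈ L, T.subtreeSize v ≤ T.subtreeSize (H v) :=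
    fun v hv => (hT.1 (T.parent v) (H v) (hH v hv)).2 v (hchild v hv)
  have hHne : ∀ v ∈ L, v ≠ H v := by
    intro v hv h
    have hh := hH v hv
    rw [← h] at hh
    simp only [hLdef, mem_filter, mem_univ, true_and] at hv
    rcases hv.1 with h' | h'
    · exact hv.2 h'
    · exact h' hh
  -- the pairwise-disjoint product sets
  set P : Fin n → Finset (Fin n × Fin n) := fun v => (A v) ×ˢ (A (H v)) with hP
  have hdisj : ∀ v1 ∈ L, ∀ v2 ∈ L, v1 ≠ v2 → Disjoint (P v1) (P v2) := by
    intro v1 hv1 v2 hv2 hne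
    rw [Finset.disjoint_left]
    rintro ⟨u, w⟩ hm1 hm2
    simp only [hP, Finset.mem_product, hA, mem_filter, mem_univ, true_and] at hm1 hm2
    -- helper: if v2 is an ancestor of v1 (v1 below), contradiction
    have key : ∀ a ∈ L, ∀ b ∈ L, a ≠ b → T.isAnc b a →
        T.isAnc (H a) w → T.isAnc (H b) w → False := by
      intro a ha b hb hab hba hwa hwb
      have h1 : T.isAnc b (T.parent a) := T.isAnc_parent' hba (Ne.symm hab)
      have h2 : T.isAnc (T.parent a) (H a) := ⟨1, by simp [(hHchild a ha).1]⟩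
      have h3 : T.isAnc b w := T.isAnc_trans' (T.isAnc_trans' h1 h2) hwa
      exact T.disjoint_sibling_subtrees (hchild b hb) (hHchild b hb) (hHne b hb) h3 hwb
    rcases T.isAnc_comparable hm1.1 hm2.1 with h | h
    · exact absurd (key v2 hv2 v1 hv1 hne.symm h hm2.2 hm1.2) not_false
    · exact absurd (key v1 hv1 v2 hv2 hne h hm1.2 hm2.2) not_false
  -- sum over L is at most n^2
  have hsumL : ∑ v ∈ L, (T.subtreeSize v) ^ 2 ≤ n ^ 2 := by
    calc ∑ v ∈ L, (T.subtreeSize v) ^ 2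
        ≤ ∑ v ∈ L, (P v).card := by
          refine Finset.sum_le_sum fun v hv => ?_
          calc (T.subtreeSize v) ^ 2 = T.subtreeSize v * T.subtreeSize v := pow_two _
            _ ≤ T.subtreeSize v * T.subtreeSize (H v) :=
                Nat.mul_le_mul_left _ (hHsize v hv)
            _ = (P v).card := by
                simp only [hP, Finset.card_product, hAcard]
      _ = (L.biUnion P).card := (Finset.card_biUnion hdisj).symm
      _ ≤ (univ : Finset (Fin n × Fin n)).card := Finset.card_le_card (Finset.subset_univ _)
      _ = n ^ 2 := by simp [pow_two]
  -- split off the root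
  have hsplit : univ.filter (fun v => T.isLight v) = insert T.root L := by
    ext v
    simp only [mem_filter, mem_univ, true_and, Finset.mem_insert, hLdef]
    constructor
    · intro h
      rcases eq_or_ne v T.root with h' | h'
      · exact Or.inl h'
      · exact Or.inr ⟨h, h'⟩
    · rintro (h | h)
      · exact h ▸ Or.inl rfl
      · exact h.1
  have hrootnot : T.root ∉ L := by simp [hLdef]
  rw [hsplit, Finset.sum_insert hrootnot]
  have hroot : T.subtreeSize T.root ≤ n := by
    rw [hAcard]
    exact le_trans (Finset.card_le_card (Finset.subset_univ _)) (by simp)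
  calc T.subtreeSize T.root ^ 2 + ∑ v ∈ L, T.subtreeSize v ^ 2
      ≤ n ^ 2 + n ^ 2 := Nat.add_le_add (Nat.pow_le_pow_left hroot 2) hsumL
    _ = 2 * n ^ 2 := by ring
end

section
/- Let n ≥ m ≥ 1 be reals and f(t) = t^2 * (1 + ln(n/t)). Suppose t : ℕ → ℝ satisfies t(0) = 0 and for every integer m' with 1 ≤ m' ≤ m there exist nonnegative integers m₁, …, m_k with each m_i ≤ (m'-1)/2, ∑ m_i ≤ m'-1, and t(m') ≤ f(m') + ∑ t(m_i). Then t(m') ≤ C * f(m') for an absolute constant C (e.g., C = 4) for all m' ≤ m. -/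
open Finset

private lemma log_aux (M b : ℝ) (hb : 0 < b) (hM : 0 < M) :
    b * Real.log (M / b) ≤ M / Real.exp 1 := by
  have he : (0:ℝ) < Real.exp 1 := Real.exp_pos 1
  have h1 : (0:ℝ) < M / (Real.exp 1 * b) := by positivity
  have h2 : Real.log (M / (Real.exp 1 * b)) ≤ M / (Real.exp 1 * b) - 1 :=
    Real.log_le_sub_one_of_pos h1
  have h3 : Real.log (M / (Real.exp 1 * b)) = Real.log (M / b) - 1 := by
    rw [show M / (Real.exp 1 * b) = (M / b) / Real.exp 1 by ring,
      Real.log_div (div_pos hM hb).ne' he.ne', Real.log_exp]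
  rw [h3] at h2
  have h4 : Real.log (M / b) ≤ M / (Real.exp 1 * b) := by linarith
  calc b * Real.log (M / b) ≤ b * (M / (Real.exp 1 * b)) := by
        exact mul_le_mul_of_nonneg_left h4 hb.le
    _ = M / Real.exp 1 := by field_simp

/-- Lemma 6 of the paper, abstract form: if `t` satisfies the heavy-path recurrence
`t m' ≤ f m' + ∑ t (m i)` with each `m i ≤ (m'-1)/2` and `∑ m i ≤ m'-1`, where
`f t = t^2 (1 + ln(n/t))`, then `t m' ≤ 4 f m'` for all `m' ≤ m`. -/
theorem heavy_path_sum_bound (n m : ℝ) (hm : 1 ≤ m) (hmn : m ≤ n)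
    (f : ℝ → ℝ) (hf : ∀ t : ℝ, f t = t ^ 2 * (1 + Real.log (n / t)))
    (t : ℕ → ℝ) (h0 : t 0 = 0)
    (hrec : ∀ m' : ℕ, 1 ≤ m' → (m' : ℝ) ≤ m → ∃ (k : ℕ) (a : Fin k → ℕ),
      (∀ i, (a i : ℝ) ≤ ((m' : ℝ) - 1) / 2) ∧ ((∑ i, (a i : ℝ)) ≤ (m' : ℝ) - 1) ∧
      t m' ≤ f (m' : ℝ) + ∑ i, t (a i)) :
    ∀ m' : ℕ, (m' : ℝ) ≤ m → t m' ≤ 4 * f (m' : ℝ) := by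
  have hn : (1:ℝ) ≤ n := le_trans hm hmn
  have he : (0:ℝ) < Real.exp 1 := Real.exp_pos 1
  have he2 : (2:ℝ) ≤ Real.exp 1 := by
    have := Real.add_one_le_exp (1:ℝ); linarith
  -- strengthened claim
  have key : ∀ m' : ℕ, (m' : ℝ) ≤ m →
      t m' ≤ (m' : ℝ)^2 * (2 * (1 + Real.log (n / (m' : ℝ))) + 4 / Real.exp 1) := by
    intro m'
    induction m' using Nat.strong_induction_on with
    | _ m' ih =>
      intro hm'
      rcases Nat.eq_zero_or_pos m' with h0' | h1'
      · subst h0'; simp [h0]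
      · obtain ⟨k, a, ha1, ha2, ha3⟩ := hrec m' h1' hm'
        set M : ℝ := (m' : ℝ) with hMdef
        have hM1 : (1:ℝ) ≤ M := by rw [hMdef]; exact_mod_cast h1'
        have hMpos : (0:ℝ) < M := lt_of_lt_of_le one_pos hM1
        have hMn : M ≤ n := le_trans hm' hmn
        have hL : 0 ≤ Real.log (n / M) :=
          Real.log_nonneg (by rw [le_div_iff₀ hMpos]; linarith)
        -- induction hypothesis on pieces
        have hlt : ∀ i, a i < m' := by
          intro i
          have h := ha1 i
          have h2 : (a i : ℝ) < M := by linarith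
          rw [hMdef] at h2
          exact_mod_cast h2
        have hIH : ∀ i, t (a i) ≤
            (a i : ℝ)^2 * (2 * (1 + Real.log (n / (a i : ℝ))) + 4 / Real.exp 1) := by
          intro i
          refine ih (a i) (hlt i) ?_
          have h := ha1 i
          linarith
        -- per-piece bound
        have hpiece : ∀ i, (a i : ℝ)^2 * (2 * (1 + Real.log (n / (a i : ℝ))) + 4 / Real.exp 1)
            ≤ (2 + 4 / Real.exp 1 + 2 * Real.log (n / M)) * (a i : ℝ)^2
              + 2 * (M / Real.exp 1) * (a i : ℝ) := by
          intro i
          set b : ℝ := (a i : ℝ) with hbdef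
          have hb0 : 0 ≤ b := Nat.cast_nonneg _
          rcases eq_or_lt_of_le hb0 with hb | hb
          · rw [← hb]; ring_nf; positivity
          · have hsplit : Real.log (n / b) = Real.log (n / M) + Real.log (M / b) := by
              have hn0 : n ≠ 0 := by linarith
              rw [Real.log_div hn0 hb.ne', Real.log_div hn0 hMpos.ne',
                Real.log_div hMpos.ne' hb.ne']
              ring
            have hlog : b * Real.log (M / b) ≤ M / Real.exp 1 := log_aux M b hb hMpos
            have hbl : b^2 * Real.log (M / b) ≤ (M / Real.exp 1) * b := by
              calc b^2 * Real.log (M / b) = b * (b * Real.log (M / b)) := by ring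
                _ ≤ b * (M / Real.exp 1) := mul_le_mul_of_nonneg_left hlog hb0
                _ = (M / Real.exp 1) * b := by ring
            rw [hsplit]
            nlinarith [sq_nonneg b]
        -- sum bounds
        have hsum2 : ∑ i, (a i : ℝ)^2 ≤ M^2 / 2 := by
          have step : ∀ i, (a i : ℝ)^2 ≤ ((M - 1) / 2) * (a i : ℝ) := by
            intro i
            have h := ha1 i
            have hb0 : (0:ℝ) ≤ (a i : ℝ) := Nat.cast_nonneg _
            nlinarith
          calc ∑ i, (a i : ℝ)^2 ≤ ∑ i, ((M - 1) / 2) * (a i : ℝ) :=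
                Finset.sum_le_sum (fun i _ => step i)
            _ = ((M - 1) / 2) * ∑ i, (a i : ℝ) := by rw [Finset.mul_sum]
            _ ≤ ((M - 1) / 2) * (M - 1) := by
                apply mul_le_mul_of_nonneg_left ha2 (by linarith)
            _ ≤ M^2 / 2 := by nlinarith
        have hsum1 : ∑ i, (a i : ℝ) ≤ M := by linarith
        have hsum1' : (0:ℝ) ≤ ∑ i, (a i : ℝ) :=
          Finset.sum_nonneg (fun i _ => Nat.cast_nonneg _)
        -- combine
        have hcoef : (0:ℝ) ≤ 2 + 4 / Real.exp 1 + 2 * Real.log (n / M) := by positivity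
        have hbig : ∑ i, t (a i) ≤ M^2 * (1 + Real.log (n / M) + 4 / Real.exp 1) := by
          calc ∑ i, t (a i)
              ≤ ∑ i, ((2 + 4 / Real.exp 1 + 2 * Real.log (n / M)) * (a i : ℝ)^2
                + 2 * (M / Real.exp 1) * (a i : ℝ)) :=
                Finset.sum_le_sum (fun i _ => le_trans (hIH i) (hpiece i))
            _ = (2 + 4 / Real.exp 1 + 2 * Real.log (n / M)) * (∑ i, (a i : ℝ)^2)
                + 2 * (M / Real.exp 1) * (∑ i, (a i : ℝ)) := by
                rw [Finset.sum_add_distrib, ← Finset.mul_sum, ← Finset.mul_sum]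
            _ ≤ (2 + 4 / Real.exp 1 + 2 * Real.log (n / M)) * (M^2 / 2)
                + 2 * (M / Real.exp 1) * M := by
                gcongr
            _ = M^2 * (1 + Real.log (n / M) + 4 / Real.exp 1) := by ring
        have hfM : f M = M^2 * (1 + Real.log (n / M)) := hf M
        calc t m' ≤ f M + ∑ i, t (a i) := ha3
          _ ≤ M^2 * (1 + Real.log (n / M)) + M^2 * (1 + Real.log (n / M) + 4 / Real.exp 1) := by
              rw [hfM]; linarith
          _ = M^2 * (2 * (1 + Real.log (n / M)) + 4 / Real.exp 1) := by ring
  -- conclude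
  intro m' hm'
  rcases Nat.eq_zero_or_pos m' with h0' | h1'
  · subst h0'
    simp [h0, hf]
  · have hk := key m' hm'
    have hM1 : (1:ℝ) ≤ (m' : ℝ) := by exact_mod_cast h1'
    have hMpos : (0:ℝ) < (m' : ℝ) := lt_of_lt_of_le one_pos hM1
    have hL : 0 ≤ Real.log (n / (m' : ℝ)) :=
      Real.log_nonneg (by rw [le_div_iff₀ hMpos]; nlinarith [le_trans hm' hmn])
    rw [hf]
    have h4e : 4 / Real.exp 1 ≤ 2 := by
      rw [div_le_iff₀ he]; linarith
    nlinarith [sq_nonneg ((m':ℝ))]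
end

section
/- Let f(x) = x^2 * (1 + ln(n/x)) with n ≥ 4. For all reals x, y with 1 ≤ x ≤ y and x + y ≤ n - 1 and y ≤ (n-1)/2, we have f(x) + f(y) ≤ f(1) + f(x + y - 1) whenever x + y - 1 < n/2. -/
/-!
On `(0, n e^{-1/2}]` the function `t ↦ t² (1 + log (n / t))` is convex, its second derivative
being `2 log (n / t) - 1`. The pairs `(x, y)` and `(1, x + y - 1)` have the same sum and the
second one is more spread out, so convexity gives the inequality.
-/

open Real Set

theorem ConvexOn.apply_add_apply_le_of_add_eq {𝕜 : Type*} [Field 𝕜] [LinearOrder 𝕜]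
    [IsStrictOrderedRing 𝕜] {s : Set 𝕜} {f : 𝕜 → 𝕜} (hf : ConvexOn 𝕜 s f) {a b x y : 𝕜}
    (ha : a ∈ s) (hb : b ∈ s) (hax : a ≤ x) (hay : a ≤ y) (hsum : x + y = a + b) :
    f x + f y ≤ f a + f b := by
  rcases hax.eq_or_lt with rfl | hax
  · rw [add_left_cancel hsum]
  rcases hay.eq_or_lt with rfl | hay
  · obtain rfl : x = b := by linarith
    exact (add_comm _ _).le
  have hxb : x < b := by linarith
  have hyb : y < b := by linarith
  have hfx := hf.secant_mono_aux1 ha hb hax hxb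
  have hfy := hf.secant_mono_aux1 ha hb hay hyb
  refine le_of_mul_le_mul_left ?_ (sub_pos.2 (hax.trans hxb))
  linear_combination hfx + hfy + (f b - f a) * hsum

section

variable {n t : ℝ}

theorem hasDerivAt_log_div (hn : n ≠ 0) (ht : t ≠ 0) :
    HasDerivAt (fun t => log (n / t)) (-t⁻¹) t := by
  refine (((hasDerivAt_const t n).div (hasDerivAt_id t) ht).log (div_ne_zero hn ht)).congr_deriv ?_
  simp only [id_eq, zero_mul, mul_one, zero_sub, Pi.div_apply]
  field_simp

theorem hasDerivAt_sq_mul_one_add_log_div (hn : n ≠ 0) (ht : t ≠ 0) :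
    HasDerivAt (fun t => t ^ 2 * (1 + log (n / t))) (t * (1 + 2 * log (n / t))) t := by
  refine ((hasDerivAt_pow 2 t).mul ((hasDerivAt_log_div hn ht).const_add 1)).congr_deriv ?_
  field_simp
  ring

theorem hasDerivAt_mul_one_add_two_mul_log_div (hn : n ≠ 0) (ht : t ≠ 0) :
    HasDerivAt (fun t => t * (1 + 2 * log (n / t))) (2 * log (n / t) - 1) t := by
  refine ((hasDerivAt_id' t).mul
    (((hasDerivAt_log_div hn ht).const_mul 2).const_add 1)).congr_deriv ?_
  field_simp
  ring

end

theorem convexOn_sq_mul_one_add_log_div {n : ℝ} (hn : 0 < n) :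
    ConvexOn ℝ (Ioc 0 (n * exp (-(1 / 2)))) (fun t => t ^ 2 * (1 + log (n / t))) := by
  refine convexOn_of_hasDerivWithinAt2_nonneg (convex_Ioc _ _)
    (f' := fun t => t * (1 + 2 * log (n / t))) (f'' := fun t => 2 * log (n / t) - 1)
    (fun t ht => (hasDerivAt_sq_mul_one_add_log_div hn.ne' ht.1.ne').continuousAt.continuousWithinAt)
    ?_ ?_ ?_ <;> rw [interior_Ioc]
  · exact fun t ht => (hasDerivAt_sq_mul_one_add_log_div hn.ne' ht.1.ne').hasDerivWithinAt
  · exact fun t ht => (hasDerivAt_mul_one_add_two_mul_log_div hn.ne' ht.1.ne').hasDerivWithinAt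
  rintro t ⟨ht, htn⟩
  have : 1 / 2 ≤ log (n / t) := by
    rw [le_log_iff_exp_le (by positivity), le_div_iff₀ ht, mul_comm,
      ← le_div_iff₀ (exp_pos _), div_eq_mul_inv, ← exp_neg]
    exact htn.le
  linarith

theorem f_iterated_smoothing_general (n : ℝ) (f : ℝ → ℝ)
    (hf : ∀ t : ℝ, f t = t ^ 2 * (1 + Real.log (n / t)))
    (x y : ℝ) (hx : 1 ≤ x) (hxy : x ≤ y) (hlt : x + y - 1 < n / 2) :
    f x + f y ≤ f 1 + f (x + y - 1) := by
  obtain rfl : f = fun t => t ^ 2 * (1 + log (n / t)) := funext hf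
  have hn : 0 < n := by linarith
  have hhalf : n / 2 ≤ n * exp (-(1 / 2)) := by
    linarith [mul_le_mul_of_nonneg_left (add_one_le_exp (-(1 / 2))) hn.le]
  have hmem : x + y - 1 ∈ Ioc 0 (n * exp (-(1 / 2))) := ⟨by linarith, by linarith⟩
  exact (convexOn_sq_mul_one_add_log_div hn).apply_add_apply_le_of_add_eq
    ⟨one_pos, by linarith⟩ hmem hx (hx.trans hxy) (by ring)

/-- Iterated smoothing: for `1 ≤ x ≤ y`, `x + y ≤ n - 1`, `y ≤ (n-1)/2` and
`x + y - 1 < n/2`, we have `f x + f y ≤ f 1 + f (x+y-1)`. -/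
theorem f_iterated_smoothing (n : ℝ) (hn : 4 ≤ n) (f : ℝ → ℝ)
    (hf : ∀ t : ℝ, f t = t ^ 2 * (1 + Real.log (n / t)))
    (x y : ℝ) (hx : 1 ≤ x) (hxy : x ≤ y) (hsum : x + y ≤ n - 1)
    (hy : y ≤ (n - 1) / 2) (hlt : x + y - 1 < n / 2) :
    f x + f y ≤ f 1 + f (x + y - 1) :=
  f_iterated_smoothing_general n f hf x y hx hxy hlt
end
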